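/- Let a > 0 and b ∈ ℝ. Then the sums S_k = Σ_{l=1}^{k} ( ∏_{i=l+1}^{k} (1 − a/i) ) · (1/l^{1+b}) satisfy: S_k = O(1/k^a) if a < b; S_k = O(ln k / k^a) if a = b; and S_k = O(1/k^b) if a > b. -/

import Mathlib

/-!
For `i ≥ a` the factor `1 - a / i` lies in `[0, (i / (i + 1)) ^ a]`, because `1 - x ≤ e ^ (-x)`
and `log (1 + 1 / i) ≤ 1 / i`; these bounds telescope, so
`∏_{i=l+1}^k (1 - a / i) = O((l / k) ^ a)`, the at most `⌈a⌉` factors with `i < a` costing only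
a constant. Hence `|S_k| ≤ C k ^ (-a) ∑_{l ≤ k} l ^ (a - 1 - b)`, and the three regimes are those
of this power sum: it converges for `a < b`, it is a harmonic sum `≤ 1 + log k` for `a = b`, and
it is `O(k ^ (a - b))` for `a > b`, by comparison with the telescoping sum of
`l ^ (a - b) - (l - 1) ^ (a - b)`.
-/

open Real Finset

theorem one_sub_div_le_rpow_div_add_one {a x : ℝ} (ha : 0 ≤ a) (hx : 0 < x) :
    1 - a / x ≤ (x / (x + 1)) ^ a := by
  have hlog : -(1 / x) ≤ log (x / (x + 1)) := by
    have := one_sub_inv_le_log_of_pos (x := x / (x + 1)) (by positivity)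
    rwa [inv_div, one_sub_div hx.ne', sub_add_cancel_left, neg_div] at this
  calc 1 - a / x ≤ exp (-(a / x)) := by linarith [add_one_le_exp (-(a / x))]
    _ = exp (a * -(1 / x)) := by ring_nf
    _ ≤ exp (a * log (x / (x + 1))) := exp_le_exp.2 (mul_le_mul_of_nonneg_left hlog ha)
    _ = (x / (x + 1)) ^ a := by rw [rpow_def_of_pos (by positivity), mul_comm]

theorem prod_Ioc_rpow_div_add_one (a : ℝ) {l k : ℕ} (hlk : l ≤ k) :
    ∏ i ∈ Ioc l k, ((i : ℝ) / (i + 1)) ^ a = (((l : ℝ) + 1) / (k + 1)) ^ a := by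
  induction k, hlk using Nat.le_induction with
  | base => simp [div_self (by positivity : (l : ℝ) + 1 ≠ 0)]
  | succ k hlk ih =>
    rw [prod_Ioc_succ_top hlk, ih, ← mul_rpow (by positivity) (by positivity)]
    congr 1
    push_cast
    field_simp

theorem one_sub_div_nonneg_of_le {a : ℝ} {i : ℕ} (ha : 0 < a) (hi : a ≤ i) :
    0 ≤ 1 - a / i := by
  rw [sub_nonneg, div_le_one (ha.trans_le hi)]
  exact hi

theorem prod_Ioc_one_sub_div_nonneg {a : ℝ} {l k : ℕ} (ha : 0 < a) (hal : a ≤ l) :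
    0 ≤ ∏ i ∈ Ioc l k, (1 - a / i) :=
  prod_nonneg fun _ hi ↦ one_sub_div_nonneg_of_le ha
    (hal.trans (Nat.cast_le.2 (mem_Ioc.1 hi).1.le))

theorem prod_Ioc_one_sub_div_le {a : ℝ} {l k : ℕ} (ha : 0 < a) (hal : a ≤ l) (hlk : l ≤ k) :
    ∏ i ∈ Ioc l k, (1 - a / i) ≤ (((l : ℝ) + 1) / (k + 1)) ^ a := by
  have hai : ∀ i ∈ Ioc l k, a ≤ i := fun i hi ↦
    hal.trans (Nat.cast_le.2 (mem_Ioc.1 hi).1.le)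
  rw [← prod_Ioc_rpow_div_add_one a hlk]
  exact prod_le_prod (fun i hi ↦ one_sub_div_nonneg_of_le ha (hai i hi))
    (fun i hi ↦ one_sub_div_le_rpow_div_add_one ha.le (ha.trans_le (hai i hi)))

theorem abs_prod_Ioc_one_sub_div_le_pow {a : ℝ} (ha : 0 ≤ a) (l n : ℕ) :
    |∏ i ∈ Ioc l n, (1 - a / i)| ≤ (1 + a) ^ (n - l) := by
  rw [abs_prod, ← Nat.card_Ioc, ← prod_const]
  refine prod_le_prod (fun _ _ ↦ abs_nonneg _) (fun i hi ↦ ?_)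
  have hi : (1 : ℝ) ≤ i := Nat.one_le_cast.2 (Nat.one_le_of_lt (mem_Ioc.1 hi).1)
  have : a / i ≤ a := div_le_self ha hi
  rw [abs_le]
  constructor <;> linarith [div_nonneg ha (zero_le_one.trans hi)]

theorem abs_prod_Icc_one_sub_div_le {a : ℝ} (ha : 0 < a) {l k : ℕ} (hl : 1 ≤ l)
    (hlk : l ≤ k) (hak : ⌈a⌉₊ ≤ k) :
    |∏ i ∈ Icc (l + 1) k, (1 - a / i)| ≤
      (1 + a) ^ ⌈a⌉₊ * ((⌈a⌉₊ : ℝ) + 1) ^ a * ((l : ℝ) / k) ^ a := by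
  set n := ⌈a⌉₊
  -- below `m` the factors are only bounded by `1 + a`, above it they telescope
  set m := max l n
  have hn : 1 ≤ n := Nat.one_le_ceil_iff.2 ha
  have ham : a ≤ m := (Nat.le_ceil a).trans (Nat.cast_le.2 (le_max_right l n))
  have hk : (0 : ℝ) < k := by exact_mod_cast hl.trans hlk
  have head : |∏ i ∈ Ioc l m, (1 - a / i)| ≤ (1 + a) ^ n :=
    (abs_prod_Ioc_one_sub_div_le_pow ha.le l m).trans
      (pow_le_pow_right₀ (by linarith) (by omega))
  have tail_nonneg : 0 ≤ ∏ i ∈ Ioc m k, (1 - a / i) := prod_Ioc_one_sub_div_nonneg ha ham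
  have tail : ∏ i ∈ Ioc m k, (1 - a / i) ≤ (n + 1) ^ a * ((l : ℝ) / k) ^ a := by
    rw [← mul_rpow (by positivity) (by positivity)]
    refine (prod_Ioc_one_sub_div_le ha ham (max_le hlk hak)).trans
      (rpow_le_rpow (by positivity) ?_ ha.le)
    have hmn : (m : ℝ) + 1 ≤ (n + 1) * l := by
      have : (1 : ℝ) ≤ l := by exact_mod_cast hl
      have : (1 : ℝ) ≤ n := by exact_mod_cast hn
      rw [Nat.cast_max]
      exact add_le_of_le_sub_right (max_le (by nlinarith) (by nlinarith))
    rw [mul_div_assoc']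
    exact div_le_div₀ (by positivity) hmn hk (by linarith)
  rw [Icc_add_one_left_eq_Ioc, ← prod_Ioc_consecutive _ (le_max_left l n) (max_le hlk hak),
    abs_mul, abs_of_nonneg tail_nonneg, mul_assoc]
  exact mul_le_mul head tail tail_nonneg (by positivity)

noncomputable def dampedSum (a b : ℝ) (k : ℕ) : ℝ :=
  ∑ l ∈ Icc 1 k, (∏ i ∈ Icc (l + 1) k, (1 - a / (i : ℝ))) * (1 / (l : ℝ) ^ (1 + b))

theorem abs_dampedSum_le {a : ℝ} (ha : 0 < a) (b : ℝ) :
    ∃ C, 0 ≤ C ∧ ∀ k : ℕ, ⌈a⌉₊ ≤ k →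
      |dampedSum a b k| ≤ C / (k : ℝ) ^ a * ∑ l ∈ Icc 1 k, (l : ℝ) ^ (a - 1 - b) := by
  set K := (1 + a) ^ ⌈a⌉₊ * ((⌈a⌉₊ : ℝ) + 1) ^ a
  refine ⟨K, by positivity, fun k hak ↦ ?_⟩
  rw [mul_sum]
  refine (abs_sum_le_sum_abs _ _).trans (sum_le_sum fun l hl ↦ ?_)
  obtain ⟨hl, hlk⟩ := mem_Icc.1 hl
  have hl0 : (0 : ℝ) < l := by exact_mod_cast hl
  have hk0 : (0 : ℝ) < k := by exact_mod_cast hl.trans hlk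
  calc |(∏ i ∈ Icc (l + 1) k, (1 - a / (i : ℝ))) * (1 / (l : ℝ) ^ (1 + b))|
      = |∏ i ∈ Icc (l + 1) k, (1 - a / (i : ℝ))| * (1 / (l : ℝ) ^ (1 + b)) := by
        rw [abs_mul, abs_of_nonneg (a := 1 / (l : ℝ) ^ (1 + b)) (by positivity)]
    _ ≤ K * ((l : ℝ) / k) ^ a * (1 / (l : ℝ) ^ (1 + b)) := by
        gcongr
        exact abs_prod_Icc_one_sub_div_le ha hl hlk hak
    _ = K / (k : ℝ) ^ a * (l : ℝ) ^ (a - 1 - b) := by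
        rw [div_rpow hl0.le hk0.le, show a - 1 - b = a - (1 + b) by ring, rpow_sub hl0]
        ring

theorem sum_Icc_rpow_neg_one_le_one_add_log (k : ℕ) :
    ∑ l ∈ Icc 1 k, (l : ℝ) ^ (-1 : ℝ) ≤ 1 + log k := by
  simpa [harmonic_eq_sum_Icc, rpow_neg_one] using harmonic_le_one_add_log k

theorem min_mul_rpow_sub_one_le_rpow_sub_rpow {p x : ℝ} (hp : 0 < p) (hx : 1 ≤ x) :
    min p 1 * x ^ (p - 1) ≤ x ^ p - (x - 1) ^ p := by
  have hx0 : 0 < x := by linarith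
  have hpow : x ^ p = x ^ (p - 1) * x := by
    rw [rpow_sub_one hx0.ne', div_mul_cancel₀ _ hx0.ne']
  rcases le_total p 1 with hp1 | hp1
  · -- Bernoulli: `(1 - 1 / x) ^ p ≤ 1 - p / x`
    have bernoulli := rpow_one_add_le_one_add_mul_self (s := -x⁻¹)
      (by linarith [inv_le_one_of_one_le₀ hx]) hp.le hp1
    have hsplit : (x - 1) ^ p = x ^ p * (1 + -x⁻¹) ^ p := by
      rw [← mul_rpow hx0.le (by linarith [inv_le_one_of_one_le₀ hx])]
      field_simp
      ring_nf
    have := mul_le_mul_of_nonneg_left bernoulli (rpow_nonneg hx0.le p)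
    rw [min_eq_left hp1, hsplit, hpow]
    rw [hpow] at this
    field_simp at this ⊢
    linarith
  · -- `(x - 1) ^ p ≤ x ^ (p - 1) * (x - 1)`
    have hsplit : (x - 1) ^ p = (x - 1) ^ (p - 1) * (x - 1) := by
      conv_lhs => rw [← sub_add_cancel p 1]
      rw [rpow_add' (by linarith) (by linarith), rpow_one]
    have := rpow_le_rpow (by linarith) (sub_le_self x zero_le_one) (by linarith : 0 ≤ p - 1)
    rw [min_eq_right hp1, hsplit, hpow]
    nlinarith

theorem sum_Icc_rpow_le {c : ℝ} (hc : -1 < c) (k : ℕ) :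
    ∑ l ∈ Icc 1 k, (l : ℝ) ^ c ≤ (k : ℝ) ^ (c + 1) / min (c + 1) 1 := by
  have hp : 0 < min (c + 1) 1 := lt_min (by linarith) one_pos
  rw [le_div_iff₀' hp, mul_sum]
  induction k with
  | zero => simpa using rpow_nonneg le_rfl (c + 1)
  | succ k ih =>
    rw [sum_Icc_succ_top (by omega)]
    have := min_mul_rpow_sub_one_le_rpow_sub_rpow (p := c + 1) (x := k + 1)
      (by linarith) (by simp)
    push_cast
    simp only [add_sub_cancel_right] at this
    linarith

theorem dampedSum_le_of_lt {a b : ℝ} (ha : 0 < a) (hab : a < b) :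
    ∃ C : ℝ, ∃ N : ℕ, ∀ k ≥ N, |dampedSum a b k| ≤ C / (k : ℝ) ^ a := by
  obtain ⟨C, hC, hS⟩ := abs_dampedSum_le ha b
  have hsum : Summable fun n : ℕ ↦ (n : ℝ) ^ (a - 1 - b) := summable_nat_rpow.2 (by linarith)
  refine ⟨C * ∑' n : ℕ, (n : ℝ) ^ (a - 1 - b), ⌈a⌉₊, fun k hk ↦ (hS k hk).trans ?_⟩
  rw [mul_div_right_comm]
  exact mul_le_mul_of_nonneg_left
    (hsum.sum_le_tsum _ fun n _ ↦ rpow_nonneg n.cast_nonneg _) (by positivity)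

theorem dampedSum_le_of_eq {a : ℝ} (ha : 0 < a) :
    ∃ C : ℝ, ∃ N : ℕ, ∀ k ≥ N, |dampedSum a a k| ≤ C * log k / (k : ℝ) ^ a := by
  obtain ⟨C, hC, hS⟩ := abs_dampedSum_le ha a
  refine ⟨2 * C, max ⌈a⌉₊ 3, fun k hk ↦ (hS k (le_of_max_le_left hk)).trans ?_⟩
  have hk : (3 : ℝ) ≤ k := by exact_mod_cast le_of_max_le_right hk
  have hlog : 1 ≤ log k := by
    rw [le_log_iff_exp_le (by linarith)]
    exact exp_one_lt_three.le.trans hk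
  rw [show a - 1 - a = -1 by ring]
  calc C / (k : ℝ) ^ a * ∑ l ∈ Icc 1 k, (l : ℝ) ^ (-1 : ℝ)
      ≤ C / (k : ℝ) ^ a * (1 + log k) :=
        mul_le_mul_of_nonneg_left (sum_Icc_rpow_neg_one_le_one_add_log k) (by positivity)
    _ ≤ C / (k : ℝ) ^ a * (2 * log k) := by gcongr; linarith
    _ = 2 * C * log k / (k : ℝ) ^ a := by ring

theorem dampedSum_le_of_gt {a b : ℝ} (ha : 0 < a) (hba : b < a) :
    ∃ C : ℝ, ∃ N : ℕ, ∀ k ≥ N, |dampedSum a b k| ≤ C / (k : ℝ) ^ b := by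
  obtain ⟨C, hC, hS⟩ := abs_dampedSum_le ha b
  refine ⟨C / min (a - b) 1, ⌈a⌉₊, fun k hk ↦ (hS k hk).trans ?_⟩
  have hk : (0 : ℝ) < k := by exact_mod_cast (Nat.one_le_ceil_iff.2 ha).trans hk
  have hsum := sum_Icc_rpow_le (c := a - 1 - b) (by linarith) k
  rw [show a - 1 - b + 1 = a - b by ring, rpow_sub hk] at hsum
  calc C / (k : ℝ) ^ a * ∑ l ∈ Icc 1 k, (l : ℝ) ^ (a - 1 - b)
      ≤ C / (k : ℝ) ^ a * ((k : ℝ) ^ a / (k : ℝ) ^ b / min (a - b) 1) :=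
        mul_le_mul_of_nonneg_left hsum (by positivity)
    _ = C / min (a - b) 1 / (k : ℝ) ^ b := by field_simp

/-- Lemma 4 of the paper.
For `a > 0` and `b ∈ ℝ`, the sums `S_k = ∑_{l=1}^k (∏_{i=l+1}^k (1 − a/i)) / l^{1+b}`
satisfy `S_k = O(1/k^a)` if `a < b`, `S_k = O(ln k / k^a)` if `a = b`, and
`S_k = O(1/k^b)` if `a > b`. -/
theorem sum_prod_one_sub_div_bound
    (a b : ℝ) (ha : 0 < a) :
    (a < b → ∃ C : ℝ, ∃ N : ℕ, ∀ k ≥ N,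
      |∑ l ∈ Finset.Icc 1 k,
          (∏ i ∈ Finset.Icc (l + 1) k, (1 - a / (i : ℝ))) * (1 / (l : ℝ) ^ (1 + b))| ≤
        C / (k : ℝ) ^ a) ∧
    (a = b → ∃ C : ℝ, ∃ N : ℕ, ∀ k ≥ N,
      |∑ l ∈ Finset.Icc 1 k,
          (∏ i ∈ Finset.Icc (l + 1) k, (1 - a / (i : ℝ))) * (1 / (l : ℝ) ^ (1 + b))| ≤
        C * Real.log (k : ℝ) / (k : ℝ) ^ a) ∧
    (b < a → ∃ C : ℝ, ∃ N : ℕ, ∀ k ≥ N,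
      |∑ l ∈ Finset.Icc 1 k,
          (∏ i ∈ Finset.Icc (l + 1) k, (1 - a / (i : ℝ))) * (1 / (l : ℝ) ^ (1 + b))| ≤
        C / (k : ℝ) ^ b) := by
  refine ⟨fun hab ↦ dampedSum_le_of_lt ha hab, ?_, fun hba ↦ dampedSum_le_of_gt ha hba⟩
  rintro rfl
  exact dampedSum_le_of_eq ha
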